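/- Suppose in addition that W is α-Hölder continuous for some α ∈ (0,1], i.e. there exists H > 0 with ‖W(s) − W(r)‖ ≤ H |s − r|^α for all r, s ∈ [0,T]. Then the pathwise value function is α-Hölder continuous in time uniformly in space: there exists a constant K > 0, depending only on L_V, L_S, ‖V‖_∞, C, ν, H, T and α, such that |U(t,x) − U(t′,x)| ≤ K |t − t′|^α for all t, t′ ∈ [0,T] and all x ∈ ℝⁿ. -/

import Mathlib

open MeasureTheory Set

/-- The controlled path `Z_s^{t,x,u} = x + ∫_t^s u(r) dr + √ν (W(s) - W(t))`. -/
noncomputable def ctrlPath {n : ℕ} (ν : ℝ) (W : ℝ → EuclideanSpace ℝ (Fin n))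
    (t : ℝ) (x : EuclideanSpace ℝ (Fin n)) (u : ℝ → EuclideanSpace ℝ (Fin n))
    (s : ℝ) : EuclideanSpace ℝ (Fin n) :=
  x + (∫ r in t..s, u r) + Real.sqrt ν • (W s - W t)

/-- The pathwise action `J(t,x,u)`. -/
noncomputable def action {n : ℕ} (T ν : ℝ) (W : ℝ → EuclideanSpace ℝ (Fin n))
    (V S : EuclideanSpace ℝ (Fin n) → ℝ) (t : ℝ) (x : EuclideanSpace ℝ (Fin n))
    (u : ℝ → EuclideanSpace ℝ (Fin n)) : ℝ :=
  (∫ s in t..T, (‖u s‖ ^ 2 / 2 + V (ctrlPath ν W t x u s))) + S (ctrlPath ν W t x u T)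

/-- An admissible control: measurable and uniformly bounded by `C`. -/
def IsAdmissible {n : ℕ} (C : ℝ) (u : ℝ → EuclideanSpace ℝ (Fin n)) : Prop :=
  Measurable u ∧ ∀ s, ‖u s‖ ≤ C

/-- The pathwise value function `U(t,x) = inf { J(t,x,u) : u admissible }`. -/
noncomputable def value {n : ℕ} (T ν C : ℝ) (W : ℝ → EuclideanSpace ℝ (Fin n))
    (V S : EuclideanSpace ℝ (Fin n) → ℝ) (t : ℝ) (x : EuclideanSpace ℝ (Fin n)) : ℝ :=
  sInf {r | ∃ u : ℝ → EuclideanSpace ℝ (Fin n), IsAdmissible C u ∧ r = action T ν W V S t x u}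

lemma adm_intInt {n : ℕ} {C : ℝ} {u : ℝ → EuclideanSpace ℝ (Fin n)} (hu : IsAdmissible C u)
    (a b : ℝ) : IntervalIntegrable u volume a b := by
  constructor <;>
  · refine MeasureTheory.Integrable.mono' (integrable_const C) hu.1.aestronglyMeasurable.restrict ?_
    exact Filter.Eventually.of_forall fun s => hu.2 s

lemma normsq_intInt {n : ℕ} {C : ℝ} {u : ℝ → EuclideanSpace ℝ (Fin n)} (hu : IsAdmissible C u)
    (a b : ℝ) : IntervalIntegrable (fun s => ‖u s‖ ^ 2 / 2) volume a b := by
  constructor <;>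
  · refine MeasureTheory.Integrable.mono' (integrable_const (C ^ 2 / 2))
      ((hu.1.norm.pow_const 2).div_const 2).aestronglyMeasurable.restrict ?_
    refine Filter.Eventually.of_forall fun s => ?_
    have h1 := hu.2 s
    have h2 := norm_nonneg (u s)
    rw [Real.norm_eq_abs, abs_div, abs_pow, abs_norm]
    have : |(2:ℝ)| = 2 := by norm_num
    rw [this]
    gcongr

lemma ctrlPath_contOn {n : ℕ} {C T ν : ℝ} {W : ℝ → EuclideanSpace ℝ (Fin n)}
    (hW : ContinuousOn W (Icc 0 T)) {u : ℝ → EuclideanSpace ℝ (Fin n)}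
    (hu : IsAdmissible C u) (t : ℝ) (x : EuclideanSpace ℝ (Fin n)) :
    ContinuousOn (ctrlPath ν W t x u) (Icc 0 T) := by
  unfold ctrlPath
  refine ContinuousOn.add (Continuous.continuousOn ?_) ?_
  · exact continuous_const.add (intervalIntegral.continuous_primitive (adm_intInt hu) t)
  · exact (hW.sub continuousOn_const).const_smul (Real.sqrt ν)

lemma lip_cont {n : ℕ} {L : ℝ} {V : EuclideanSpace ℝ (Fin n) → ℝ}
    (hL : 0 ≤ L) (hVlip : ∀ y y', |V y - V y'| ≤ L * ‖y - y'‖) : Continuous V := by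
  have : LipschitzWith L.toNNReal V := by
    refine LipschitzWith.of_dist_le_mul fun y y' => ?_
    rw [Real.dist_eq, dist_eq_norm, Real.coe_toNNReal _ hL]
    exact hVlip y y'
  exact this.continuous

lemma action_diff {n : ℕ} (T ν C L_V L_S Vbound : ℝ)
    (hT : 0 < T) (hLV : 0 ≤ L_V) (hLS : 0 ≤ L_S) (hVb : 0 ≤ Vbound)
    (W : ℝ → EuclideanSpace ℝ (Fin n)) (hW : ContinuousOn W (Icc 0 T))
    (V S : EuclideanSpace ℝ (Fin n) → ℝ)
    (hVlip : ∀ y y', |V y - V y'| ≤ L_V * ‖y - y'‖)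
    (hVbdd : ∀ y, |V y| ≤ Vbound)
    (hSlip : ∀ y y', |S y - S y'| ≤ L_S * ‖y - y'‖)
    (α H : ℝ) (hα0 : 0 < α) (hH : 0 < H)
    (hWHolder : ∀ r ∈ Icc (0 : ℝ) T, ∀ s ∈ Icc (0 : ℝ) T, ‖W s - W r‖ ≤ H * |s - r| ^ α)
    (t t' : ℝ) (ht : t ∈ Icc (0:ℝ) T) (ht' : t' ∈ Icc (0:ℝ) T) (htt' : t ≤ t')
    (x : EuclideanSpace ℝ (Fin n)) (u : ℝ → EuclideanSpace ℝ (Fin n))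
    (hu : IsAdmissible C u) :
    |action T ν W V S t x u - action T ν W V S t' x u| ≤
      (C ^ 2 / 2 + Vbound) * (t' - t) +
        (L_V * T + L_S) * (C * (t' - t) + Real.sqrt ν * (H * (t' - t) ^ α)) := by
  have hVcont : Continuous V := lip_cont hLV hVlip
  set Z := ctrlPath ν W t x u with hZ
  set Z' := ctrlPath ν W t' x u with hZ'
  have hZc : ContinuousOn Z (Icc 0 T) := ctrlPath_contOn hW hu t x
  have hZ'c : ContinuousOn Z' (Icc 0 T) := ctrlPath_contOn hW hu t' x
  have hTm : T ∈ Icc (0:ℝ) T := ⟨hT.le, le_refl T⟩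
  have hsubM : ∀ a b : ℝ, a ∈ Icc (0:ℝ) T → b ∈ Icc (0:ℝ) T → uIcc a b ⊆ Icc 0 T := by
    intro a b ha hb
    rw [← uIcc_of_le hT.le]
    exact uIcc_subset_uIcc (by rwa [uIcc_of_le hT.le]) (by rwa [uIcc_of_le hT.le])
  set f : ℝ → ℝ := fun s => ‖u s‖ ^ 2 / 2 + V (Z s) with hf
  set f' : ℝ → ℝ := fun s => ‖u s‖ ^ 2 / 2 + V (Z' s) with hf'
  have hfint : ∀ a b : ℝ, a ∈ Icc (0:ℝ) T → b ∈ Icc (0:ℝ) T → IntervalIntegrable f volume a b :=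
    fun a b ha hb => (normsq_intInt hu a b).add
      ((hVcont.comp_continuousOn (hZc.mono (hsubM a b ha hb))).intervalIntegrable)
  have hf'int : ∀ a b : ℝ, a ∈ Icc (0:ℝ) T → b ∈ Icc (0:ℝ) T → IntervalIntegrable f' volume a b :=
    fun a b ha hb => (normsq_intInt hu a b).add
      ((hVcont.comp_continuousOn (hZ'c.mono (hsubM a b ha hb))).intervalIntegrable)
  have hact : action T ν W V S t x u = (∫ s in t..T, f s) + S (Z T) := rfl
  have hact' : action T ν W V S t' x u = (∫ s in t'..T, f' s) + S (Z' T) := rfl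
  have hsplit : (∫ s in t..T, f s) = (∫ s in t..t', f s) + ∫ s in t'..T, f s :=
    (intervalIntegral.integral_add_adjacent_intervals (hfint t t' ht ht')
      (hfint t' T ht' hTm)).symm
  have hdiff : (∫ s in t'..T, f s) - (∫ s in t'..T, f' s)
      = ∫ s in t'..T, (V (Z s) - V (Z' s)) := by
    rw [← intervalIntegral.integral_sub (hfint t' T ht' hTm) (hf'int t' T ht' hTm)]
    apply intervalIntegral.integral_congr
    intro s _
    simp only [hf, hf']
    ring
  have hZZ' : ∀ s, Z s - Z' s = (∫ r in t..t', u r) + Real.sqrt ν • (W t' - W t) := by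
    intro s
    have hsp : (∫ r in t..s, u r) = (∫ r in t..t', u r) + ∫ r in t'..s, u r :=
      (intervalIntegral.integral_add_adjacent_intervals (adm_intInt hu t t')
        (adm_intInt hu t' s)).symm
    rw [hZ, hZ']
    unfold ctrlPath
    rw [hsp]
    module
  have hE : ∀ s, ‖Z s - Z' s‖ ≤ C * (t' - t) + Real.sqrt ν * (H * (t' - t) ^ α) := by
    intro s
    rw [hZZ' s]
    refine (norm_add_le _ _).trans (add_le_add ?_ ?_)
    · have h1 : ‖∫ r in t..t', u r‖ ≤ C * |t' - t| :=
        intervalIntegral.norm_integral_le_of_norm_le_const (fun r _ => hu.2 r)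
      rwa [abs_of_nonneg (by linarith : (0:ℝ) ≤ t' - t)] at h1
    · rw [norm_smul, Real.norm_eq_abs, abs_of_nonneg (Real.sqrt_nonneg ν)]
      refine mul_le_mul_of_nonneg_left ?_ (Real.sqrt_nonneg ν)
      have h2 := hWHolder t ht t' ht'
      rwa [abs_of_nonneg (by linarith : (0:ℝ) ≤ t' - t)] at h2
  set E := C * (t' - t) + Real.sqrt ν * (H * (t' - t) ^ α) with hEdef
  have hE0 : 0 ≤ E := le_trans (norm_nonneg _) (hE t)
  -- term 1
  have hT1 : |∫ s in t..t', f s| ≤ (C ^ 2 / 2 + Vbound) * (t' - t) := by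
    have h1 : ∀ s ∈ Set.uIoc t t', ‖f s‖ ≤ C ^ 2 / 2 + Vbound := by
      intro s _
      have h2 := hu.2 s
      have h3 := norm_nonneg (u s)
      obtain ⟨h4l, h4r⟩ := abs_le.mp (hVbdd (Z s))
      have hfs : f s = ‖u s‖ ^ 2 / 2 + V (Z s) := rfl
      rw [Real.norm_eq_abs, hfs, abs_le]
      constructor <;> nlinarith
    have := intervalIntegral.norm_integral_le_of_norm_le_const h1
    rwa [Real.norm_eq_abs, abs_of_nonneg (by linarith : (0:ℝ) ≤ t' - t)] at this
  -- term 2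
  have hT2 : |∫ s in t'..T, (V (Z s) - V (Z' s))| ≤ L_V * E * T := by
    have h1 : ∀ s ∈ Set.uIoc t' T, ‖V (Z s) - V (Z' s)‖ ≤ L_V * E := by
      intro s _
      rw [Real.norm_eq_abs]
      exact (hVlip (Z s) (Z' s)).trans (mul_le_mul_of_nonneg_left (hE s) hLV)
    have h2 := intervalIntegral.norm_integral_le_of_norm_le_const h1
    rw [Real.norm_eq_abs, abs_of_nonneg (by linarith [ht'.2] : (0:ℝ) ≤ T - t')] at h2
    refine h2.trans ?_
    have : (0:ℝ) ≤ L_V * E := mul_nonneg hLV hE0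
    nlinarith [ht'.1]
  -- term 3
  have hT3 : |S (Z T) - S (Z' T)| ≤ L_S * E :=
    (hSlip (Z T) (Z' T)).trans (mul_le_mul_of_nonneg_left (hE T) hLS)
  have hkey : action T ν W V S t x u - action T ν W V S t' x u
      = (∫ s in t..t', f s) + (∫ s in t'..T, (V (Z s) - V (Z' s))) + (S (Z T) - S (Z' T)) := by
    rw [hact, hact', hsplit, ← hdiff]
    ring
  rw [hkey]
  calc |(∫ s in t..t', f s) + (∫ s in t'..T, (V (Z s) - V (Z' s))) + (S (Z T) - S (Z' T))|
      ≤ |(∫ s in t..t', f s)| + |(∫ s in t'..T, (V (Z s) - V (Z' s)))| + |S (Z T) - S (Z' T)| :=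
        (abs_add_le _ _).trans (add_le_add_left (abs_add_le _ _) _)
    _ ≤ (C ^ 2 / 2 + Vbound) * (t' - t) + L_V * E * T + L_S * E := by
        exact add_le_add (add_le_add hT1 hT2) hT3
    _ = (C ^ 2 / 2 + Vbound) * (t' - t) + (L_V * T + L_S) * E := by ring

lemma action_lb {n : ℕ} (T ν C L_V L_S Vbound : ℝ)
    (hT : 0 < T) (hC : 0 < C) (hLV : 0 ≤ L_V) (hLS : 0 ≤ L_S) (hVb : 0 ≤ Vbound)
    (W : ℝ → EuclideanSpace ℝ (Fin n)) (hW : ContinuousOn W (Icc 0 T))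
    (V S : EuclideanSpace ℝ (Fin n) → ℝ)
    (hVlip : ∀ y y', |V y - V y'| ≤ L_V * ‖y - y'‖)
    (hVbdd : ∀ y, |V y| ≤ Vbound)
    (hSlip : ∀ y y', |S y - S y'| ≤ L_S * ‖y - y'‖)
    (α H : ℝ) (hα0 : 0 < α) (hH : 0 < H)
    (hWHolder : ∀ r ∈ Icc (0 : ℝ) T, ∀ s ∈ Icc (0 : ℝ) T, ‖W s - W r‖ ≤ H * |s - r| ^ α)
    (t : ℝ) (ht : t ∈ Icc (0:ℝ) T) (x : EuclideanSpace ℝ (Fin n))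
    (u : ℝ → EuclideanSpace ℝ (Fin n)) (hu : IsAdmissible C u) :
    -(Vbound * T) + (S x - L_S * (C * T + Real.sqrt ν * (H * T ^ α)))
      ≤ action T ν W V S t x u := by
  set Z := ctrlPath ν W t x u with hZ
  have hZc : ContinuousOn Z (Icc 0 T) := ctrlPath_contOn hW hu t x
  have hTm : T ∈ Icc (0:ℝ) T := ⟨hT.le, le_refl T⟩
  set f : ℝ → ℝ := fun s => ‖u s‖ ^ 2 / 2 + V (Z s) with hf
  have hfint : IntervalIntegrable f volume t T := by
    refine (normsq_intInt hu t T).add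
      (((lip_cont hLV hVlip).comp_continuousOn (hZc.mono ?_)).intervalIntegrable)
    rw [uIcc_of_le ht.2]
    exact Icc_subset_Icc ht.1 (le_refl T)
  have hact : action T ν W V S t x u = (∫ s in t..T, f s) + S (Z T) := rfl
  have hint_lb : -(Vbound * T) ≤ ∫ s in t..T, f s := by
    have h1 : ∫ s in t..T, (-Vbound : ℝ) ≤ ∫ s in t..T, f s := by
      refine intervalIntegral.integral_mono_on ht.2 intervalIntegrable_const hfint ?_
      intro s _
      have h2 := (abs_le.mp (hVbdd (Z s))).1
      have h3 := sq_nonneg ‖u s‖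
      have hfs : f s = ‖u s‖ ^ 2 / 2 + V (Z s) := rfl
      rw [hfs]; nlinarith
    rw [intervalIntegral.integral_const, smul_eq_mul] at h1
    nlinarith [ht.1, ht.2]
  have hZT : Z T - x = (∫ r in t..T, u r) + Real.sqrt ν • (W T - W t) := by
    rw [hZ]; unfold ctrlPath; abel
  have hnorm : ‖Z T - x‖ ≤ C * T + Real.sqrt ν * (H * T ^ α) := by
    rw [hZT]
    refine (norm_add_le _ _).trans (add_le_add ?_ ?_)
    · have h1 : ‖∫ r in t..T, u r‖ ≤ C * |T - t| :=
        intervalIntegral.norm_integral_le_of_norm_le_const (fun r _ => hu.2 r)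
      rw [abs_of_nonneg (by linarith [ht.2] : (0:ℝ) ≤ T - t)] at h1
      refine h1.trans ?_
      nlinarith [ht.1]
    · rw [norm_smul, Real.norm_eq_abs, abs_of_nonneg (Real.sqrt_nonneg ν)]
      refine mul_le_mul_of_nonneg_left ?_ (Real.sqrt_nonneg ν)
      have h2 := hWHolder t ht T hTm
      rw [abs_of_nonneg (by linarith [ht.2] : (0:ℝ) ≤ T - t)] at h2
      refine h2.trans (mul_le_mul_of_nonneg_left ?_ hH.le)
      exact Real.rpow_le_rpow (by linarith [ht.2]) (by linarith [ht.1]) hα0.le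
  have hS : S x - L_S * (C * T + Real.sqrt ν * (H * T ^ α)) ≤ S (Z T) := by
    have h1 := (abs_le.mp (hSlip x (Z T))).2
    rw [← norm_sub_rev] at h1
    nlinarith [mul_le_mul_of_nonneg_left hnorm hLS]
  rw [hact]
  linarith

/-- if `W` is `α`-Hölder continuous on `[0,T]`, then the value function is
`α`-Hölder continuous in time, uniformly in space. -/
theorem statement5
    (n : ℕ) (hn : 1 ≤ n) (T ν C L_V L_S Vbound : ℝ)
    (hT : 0 < T) (hν : 0 < ν) (hC : 0 < C)
    (W : ℝ → EuclideanSpace ℝ (Fin n)) (hW : ContinuousOn W (Icc 0 T))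
    (V S : EuclideanSpace ℝ (Fin n) → ℝ)
    (hVlip : ∀ y y', |V y - V y'| ≤ L_V * ‖y - y'‖)
    (hVbdd : ∀ y, |V y| ≤ Vbound)
    (hSlip : ∀ y y', |S y - S y'| ≤ L_S * ‖y - y'‖)
    (α H : ℝ) (hα : α ∈ Set.Ioc (0 : ℝ) 1) (hH : 0 < H)
    (hWHolder : ∀ r ∈ Icc (0 : ℝ) T, ∀ s ∈ Icc (0 : ℝ) T, ‖W s - W r‖ ≤ H * |s - r| ^ α) :
    ∃ K > 0, ∀ t ∈ Icc (0 : ℝ) T, ∀ t' ∈ Icc (0 : ℝ) T, ∀ x : EuclideanSpace ℝ (Fin n),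
      |value T ν C W V S t x - value T ν C W V S t' x| ≤ K * |t - t'| ^ α := by
  obtain ⟨hα0, hα1⟩ := hα
  obtain ⟨y₀, hy₀⟩ : ∃ y : EuclideanSpace ℝ (Fin n), ‖y‖ = 1 :=
    ⟨EuclideanSpace.single ⟨0, hn⟩ 1, by simp⟩
  have hLV : 0 ≤ L_V := by
    have h := hVlip y₀ 0
    rw [sub_zero, hy₀, mul_one] at h
    exact le_trans (abs_nonneg _) h
  have hLS : 0 ≤ L_S := by
    have h := hSlip y₀ 0
    rw [sub_zero, hy₀, mul_one] at h
    exact le_trans (abs_nonneg _) h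
  have hVb : 0 ≤ Vbound := le_trans (abs_nonneg _) (hVbdd 0)
  have hM0 : 0 ≤ L_V * T + L_S := by nlinarith
  have hA : 0 ≤ C ^ 2 / 2 + Vbound + (L_V * T + L_S) * C := by nlinarith
  set K := (C ^ 2 / 2 + Vbound + (L_V * T + L_S) * C) * T ^ (1 - α)
      + (L_V * T + L_S) * (Real.sqrt ν * H) + 1 with hKdef
  have hK : 0 < K := by
    have h1 : 0 ≤ (C ^ 2 / 2 + Vbound + (L_V * T + L_S) * C) * T ^ (1 - α) :=
      mul_nonneg hA (Real.rpow_nonneg hT.le _)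
    have h2 : 0 ≤ (L_V * T + L_S) * (Real.sqrt ν * H) :=
      mul_nonneg hM0 (mul_nonneg (Real.sqrt_nonneg ν) hH.le)
    rw [hKdef]; linarith
  refine ⟨K, hK, ?_⟩
  have hNe : ∀ t x, Set.Nonempty
      {r | ∃ u : ℝ → EuclideanSpace ℝ (Fin n), IsAdmissible C u ∧ r = action T ν W V S t x u} :=
    fun t x => ⟨action T ν W V S t x 0, 0,
      ⟨measurable_const, fun s => by simp [hC.le]⟩, rfl⟩
  have hBdd : ∀ t ∈ Icc (0:ℝ) T, ∀ x, BddBelow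
      {r | ∃ u : ℝ → EuclideanSpace ℝ (Fin n), IsAdmissible C u ∧ r = action T ν W V S t x u} := by
    intro t ht x
    refine ⟨-(Vbound * T) + (S x - L_S * (C * T + Real.sqrt ν * (H * T ^ α))), ?_⟩
    rintro r ⟨u, hu, rfl⟩
    exact action_lb T ν C L_V L_S Vbound hT hC hLV hLS hVb W hW V S hVlip hVbdd hSlip
      α H hα0 hH hWHolder t ht x u hu
  have key2 : ∀ t ∈ Icc (0:ℝ) T, ∀ t' ∈ Icc (0:ℝ) T, t ≤ t' → ∀ x,
      |value T ν C W V S t x - value T ν C W V S t' x| ≤ K * (t' - t) ^ α := by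
    intro t ht t' ht' htt' x
    have hδ0 : (0:ℝ) ≤ t' - t := by linarith
    have hδT : t' - t ≤ T := by
      have := ht.1; have := ht'.2; linarith
    have hδαnn : 0 ≤ (t' - t) ^ α := Real.rpow_nonneg hδ0 α
    have hD0 : 0 ≤ K * (t' - t) ^ α := mul_nonneg hK.le hδαnn
    have hδα : t' - t ≤ T ^ (1 - α) * (t' - t) ^ α := by
      rcases eq_or_lt_of_le hδ0 with h | h
      · rw [← h, Real.zero_rpow (ne_of_gt hα0)]
        simp
      · calc t' - t = (t' - t) ^ ((1 - α) + α) := by rw [sub_add_cancel, Real.rpow_one]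
          _ = (t' - t) ^ (1 - α) * (t' - t) ^ α := Real.rpow_add h _ _
          _ ≤ T ^ (1 - α) * (t' - t) ^ α :=
              mul_le_mul_of_nonneg_right
                (Real.rpow_le_rpow hδ0 hδT (by linarith)) hδαnn
    have hbound : ∀ u : ℝ → EuclideanSpace ℝ (Fin n), IsAdmissible C u →
        |action T ν W V S t x u - action T ν W V S t' x u| ≤ K * (t' - t) ^ α := by
      intro u hu
      refine (action_diff T ν C L_V L_S Vbound hT hLV hLS hVb W hW V S hVlip hVbdd hSlip
        α H hα0 hH hWHolder t t' ht ht' htt' x u hu).trans ?_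
      have hmul := mul_le_mul_of_nonneg_left hδα hA
      rw [hKdef]
      nlinarith [mul_nonneg (mul_nonneg hM0 (Real.sqrt_nonneg ν)) (mul_nonneg hH.le hδαnn)]
    have h1 : value T ν C W V S t x ≤ value T ν C W V S t' x + K * (t' - t) ^ α := by
      rw [value, value, ← sub_le_iff_le_add]
      refine le_csInf (hNe t' x) ?_
      rintro b ⟨u, hu, rfl⟩
      have h2 : sInf {r | ∃ u : ℝ → EuclideanSpace ℝ (Fin n),
          IsAdmissible C u ∧ r = action T ν W V S t x u} ≤ action T ν W V S t x u :=
        csInf_le (hBdd t ht x) ⟨u, hu, rfl⟩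
      have h3 := (abs_le.mp (hbound u hu)).2
      linarith
    have h2 : value T ν C W V S t' x ≤ value T ν C W V S t x + K * (t' - t) ^ α := by
      rw [value, value, ← sub_le_iff_le_add]
      refine le_csInf (hNe t x) ?_
      rintro b ⟨u, hu, rfl⟩
      have h2 : sInf {r | ∃ u : ℝ → EuclideanSpace ℝ (Fin n),
          IsAdmissible C u ∧ r = action T ν W V S t' x u} ≤ action T ν W V S t' x u :=
        csInf_le (hBdd t' ht' x) ⟨u, hu, rfl⟩
      have h3 := (abs_le.mp (hbound u hu)).1
      linarith
    rw [abs_le]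
    constructor <;> linarith
  intro t ht t' ht' x
  rcases le_total t t' with h | h
  · rw [abs_sub_comm t t', abs_of_nonneg (by linarith : (0:ℝ) ≤ t' - t)]
    exact key2 t ht t' ht' h x
  · rw [abs_of_nonneg (by linarith : (0:ℝ) ≤ t - t'), abs_sub_comm]
    exact key2 t' ht' t ht h x
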